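/- Let K and B be positive integers with B dividing K and M := K/B, and for k ∈ {1,…,K} let [k] := B·⌊(k−1)/B⌋ + 1; for m ∈ {1,…,M} let t_m := (m−1)·B + 1 and t_{M+1} := K+1. Let X be a countable set, let p_1,…,p_K and μ be probability mass functions on X, let C > 0 satisfy p_k(x) ≤ C·μ(x) for all k and x, let λ ≥ 1, and let f^(1),…,f^(K) : X → [0,1]. For x with μ(x) > 0 define P_m(x) := λ·μ(x) + ∑_{t=1}^{m·B} p_t(x) and B_x := {m ∈ {1,…,M} : P_m(x) ≥ 2·P_{m−1}(x)}. Then ∑_{x∈X, μ(x)>0} ∑_{m∈{1,…,M}\B_x} ∑_{k=t_m}^{t_{m+1}−1} p_k(x)·f^(k)(x) ≤ √( 4·C·log(1 + C·K/λ) · [ 2·K·λ + ∑_{k=1}^K ∑_{t<[k]} ∑_{x∈X} p_t(x)·f^(k)(x)² ] ). -/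

import Mathlib

open scoped BigOperators

noncomputable section

/-- Batch start of episode `k` under fixed batch size `B`:
`[k] := B * ⌊(k-1)/B⌋ + 1`. -/
def batchStart (B k : ℕ) : ℕ := B * ((k - 1) / B) + 1

/-- `P_m(x) := λ·μ(x) + ∑_{t=1}^{m·B} p_t(x)`. -/
def Pseq {X : Type*} (lam : ℝ) (μ : X → ℝ) (p : ℕ → X → ℝ) (B m : ℕ) (x : X) : ℝ :=
  lam * μ x + ∑ t ∈ Finset.Icc 1 (m * B), p t x

/-- The bad-batch set `B_x := {m ∈ {1,…,M} : P_m(x) ≥ 2·P_{m-1}(x)}`. -/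
def badBatches {X : Type*} (lam : ℝ) (μ : X → ℝ) (p : ℕ → X → ℝ) (B M : ℕ) (x : X) :
    Finset ℕ :=
  (Finset.Icc 1 M).filter fun m => 2 * Pseq lam μ p B (m - 1) x ≤ Pseq lam μ p B m x

/-!
Fix `x` with `μ x > 0` and write `P_m = P_m(x)`. Every episode `k` of batch `m` has prior mass
`P_{m-1}`, so Cauchy–Schwarz with weights `P_{m-1}` bounds the square of the good-batch sum at `x`
by `(∑ p_k² / P_{m-1}) · (∑ P_{m-1} f_k²)`. Since `p_k ≤ C μ(x)`, the first factor is at most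
`C μ(x) ∑ (P_m - P_{m-1}) / P_{m-1}`; on a good batch `P_m < 2 P_{m-1}`, so each ratio is at most
`2 log (P_m / P_{m-1})`, and these telescope to `2 log (P_M / P_0) ≤ 2 log (1 + C K / λ)`. The
second factor is at most `K λ μ(x) + ∑_k ∑_{t < [k]} p_t(x) f_k(x)²`. A second Cauchy–Schwarz,
over `x`, bounds the total by the square root of the product of the two factors summed over `x`.
-/

open Finset Real

lemma Finset.sum_Icc_one_sub_pred {G : Type*} [AddCommGroup G] (f : ℕ → G) (n : ℕ) :
    ∑ m ∈ Icc 1 n, (f m - f (m - 1)) = f n - f 0 := by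
  induction n with
  | zero => simp
  | succ n ih => rw [sum_Icc_succ_top (by omega), ih]; simp

lemma sub_div_le_two_mul_log_div {a b : ℝ} (ha : 0 < a) (hab : a ≤ b) (hb : b ≤ 2 * a) :
    (b - a) / a ≤ 2 * log (b / a) := by
  have hb0 : 0 < b := ha.trans_le hab
  have hlog : 1 - a / b ≤ log (b / a) := by
    simpa only [inv_div] using one_sub_inv_le_log_of_pos (div_pos hb0 ha)
  calc (b - a) / a ≤ 2 * (1 - a / b) := by
        rw [one_sub_div hb0.ne', mul_div_assoc', div_le_div_iff₀ ha hb0]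
        nlinarith [sub_nonneg.2 hab]
    _ ≤ 2 * log (b / a) := by linarith

lemma Real.tsum_le_sqrt_mul_of_sq_le_mul {ι : Type*} {r f g : ι → ℝ}
    (hf : ∀ i, 0 ≤ f i) (hg : ∀ i, 0 ≤ g i) (hfs : Summable f) (hgs : Summable g)
    (h : ∀ i, r i ^ 2 ≤ f i * g i) :
    ∑' i, r i ≤ √((∑' i, f i) * ∑' i, g i) := by
  refine tsum_le_of_sum_le' (sqrt_nonneg _) fun s => le_sqrt_of_sq_le ?_
  calc (∑ i ∈ s, r i) ^ 2 ≤ (∑ i ∈ s, f i) * ∑ i ∈ s, g i :=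
        sum_sq_le_sum_mul_sum_of_sq_le_mul s (fun i _ => hf i) (fun i _ => hg i) fun i _ => h i
    _ ≤ (∑' i, f i) * ∑' i, g i :=
        mul_le_mul (hfs.sum_le_tsum s fun i _ => hf i) (hgs.sum_le_tsum s fun i _ => hg i)
          (sum_nonneg fun i _ => hg i) (tsum_nonneg hf)

def batch (B m : ℕ) : Finset ℕ := Icc ((m - 1) * B + 1) (m * B)

lemma sum_batch_eq_sub {M : Type*} [AddCommGroup M] (F : ℕ → M) (B m : ℕ) :
    ∑ k ∈ batch B m, F k = ∑ k ∈ Icc 1 (m * B), F k - ∑ k ∈ Icc 1 ((m - 1) * B), F k := by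
  have h := sum_Ioc_consecutive F (Nat.zero_le ((m - 1) * B))
    (Nat.mul_le_mul_right B (Nat.sub_le m 1))
  rw [eq_sub_iff_add_eq, add_comm]
  simpa only [batch, ← Finset.Icc_add_one_left_eq_Ioc, zero_add] using h

lemma sum_sum_batch {M : Type*} [AddCommGroup M] (F : ℕ → M) (B n : ℕ) :
    ∑ m ∈ Icc 1 n, ∑ k ∈ batch B m, F k = ∑ k ∈ Icc 1 (n * B), F k := by
  simp only [sum_batch_eq_sub]
  simpa using Finset.sum_Icc_one_sub_pred (fun m => ∑ k ∈ Icc 1 (m * B), F k) n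

lemma batch_subset_Icc {B m n : ℕ} (hm : m ≤ n) : batch B m ⊆ Icc 1 (n * B) := by
  intro k hk
  have := Nat.mul_le_mul_right B hm
  simp only [batch, mem_Icc] at hk ⊢
  omega

lemma batchStart_eq_of_mem_batch {B m k : ℕ} (hk : k ∈ batch B m) :
    batchStart B k = (m - 1) * B + 1 := by
  simp only [batch, mem_Icc] at hk
  have hm : 1 ≤ m := by
    by_contra h
    simp only [show m = 0 by omega, zero_mul] at hk
    omega
  have hdiv : (k - 1) / B = m - 1 := by
    apply Nat.div_eq_of_lt_le
    · omega
    · rw [Nat.sub_add_cancel hm]; omega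
  rw [batchStart, hdiv, mul_comm]

lemma Ico_batchStart_subset {B k K : ℕ} (hk : k ∈ Icc 1 K) :
    Ico 1 (batchStart B k) ⊆ Icc 1 K := by
  have := Nat.mul_div_le (k - 1) B
  intro t ht
  simp only [batchStart, mem_Ico, mem_Icc] at hk ht ⊢
  omega

section Pseq

variable {X : Type*} (lam : ℝ) (μ : X → ℝ) (p : ℕ → X → ℝ) (B : ℕ) (x : X)

lemma Pseq_zero : Pseq lam μ p B 0 x = lam * μ x := by
  simp [Pseq]

lemma Pseq_sub_Pseq_pred (m : ℕ) :
    Pseq lam μ p B m x - Pseq lam μ p B (m - 1) x = ∑ k ∈ batch B m, p k x := by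
  rw [sum_batch_eq_sub, Pseq, Pseq]
  ring

variable {lam μ p B x}

lemma Pseq_pred_le {m : ℕ} (hp : ∀ k ∈ batch B m, 0 ≤ p k x) :
    Pseq lam μ p B (m - 1) x ≤ Pseq lam μ p B m x :=
  sub_nonneg.1 <| (Pseq_sub_Pseq_pred lam μ p B x m).symm ▸ sum_nonneg hp

lemma Pseq_pos {m n : ℕ} (h0 : 0 < lam * μ x) (hp : ∀ t ∈ Icc 1 (n * B), 0 ≤ p t x)
    (hmn : m ≤ n) : 0 < Pseq lam μ p B m x :=
  add_pos_of_pos_of_nonneg h0 <| sum_nonneg fun t ht =>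
    hp t (Icc_subset_Icc_right (Nat.mul_le_mul_right B hmn) ht)

lemma Pseq_le {m : ℕ} {c : ℝ} (hp : ∀ t ∈ Icc 1 (m * B), p t x ≤ c) :
    Pseq lam μ p B m x ≤ lam * μ x + (m * B : ℕ) * c := by
  have := sum_le_card_nsmul _ _ _ hp
  rw [Nat.card_Icc, nsmul_eq_mul, Nat.add_sub_cancel] at this
  rw [Pseq]
  linarith

lemma Pseq_pred_eq_of_mem_batch {m k : ℕ} (hk : k ∈ batch B m) :
    Pseq lam μ p B (m - 1) x = lam * μ x + ∑ t ∈ Ico 1 (batchStart B k), p t x := by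
  rw [Pseq, batchStart_eq_of_mem_batch hk, Finset.Ico_add_one_right_eq_Icc]

end Pseq

def goodBatches {X : Type*} (lam : ℝ) (μ : X → ℝ) (p : ℕ → X → ℝ) (B M : ℕ) (x : X) :
    Finset ℕ :=
  Icc 1 M \ badBatches lam μ p B M x

section PointwiseBound

variable {X : Type*} {lam : ℝ} {μ : X → ℝ} {p : ℕ → X → ℝ} {B M K : ℕ} {x : X}

lemma mem_goodBatches {m : ℕ} :
    m ∈ goodBatches lam μ p B M x ↔
      m ∈ Icc 1 M ∧ Pseq lam μ p B m x < 2 * Pseq lam μ p B (m - 1) x := by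
  simp only [goodBatches, badBatches, mem_sdiff, mem_filter, not_and, not_le]
  tauto

lemma sum_goodBatches_div_le_two_mul_log (h0 : 0 < lam * μ x)
    (hp : ∀ t ∈ Icc 1 (M * B), 0 ≤ p t x) :
    ∑ m ∈ goodBatches lam μ p B M x,
        (Pseq lam μ p B m x - Pseq lam μ p B (m - 1) x) / Pseq lam μ p B (m - 1) x ≤
      2 * log (Pseq lam μ p B M x / Pseq lam μ p B 0 x) := by
  set P := fun m => Pseq lam μ p B m x
  have hbatch : ∀ m ∈ Icc 1 M, ∀ k ∈ batch B m, 0 ≤ p k x := fun m hm k hk =>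
    hp k (batch_subset_Icc (mem_Icc.1 hm).2 hk)
  have hpos : ∀ m ∈ Icc 1 M, 0 < P (m - 1) := fun m hm =>
    Pseq_pos h0 hp ((Nat.sub_le m 1).trans (mem_Icc.1 hm).2)
  calc ∑ m ∈ goodBatches lam μ p B M x, (P m - P (m - 1)) / P (m - 1)
      ≤ ∑ m ∈ goodBatches lam μ p B M x, 2 * (log (P m) - log (P (m - 1))) := by
        refine sum_le_sum fun m hm => ?_
        obtain ⟨hm, hgood⟩ := mem_goodBatches.1 hm
        rw [← log_div (hpos m hm |>.trans_le (Pseq_pred_le (hbatch m hm))).ne' (hpos m hm).ne']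
        exact sub_div_le_two_mul_log_div (hpos m hm) (Pseq_pred_le (hbatch m hm)) hgood.le
    _ ≤ ∑ m ∈ Icc 1 M, 2 * (log (P m) - log (P (m - 1))) := by
        refine sum_le_sum_of_subset_of_nonneg sdiff_subset fun m hm _ => ?_
        have := log_le_log (hpos m hm) (Pseq_pred_le (hbatch m hm))
        linarith
    _ = 2 * log (P M / P 0) := by
        rw [← mul_sum, Finset.sum_Icc_one_sub_pred (fun m => log (P m)),
          log_div (Pseq_pos h0 hp le_rfl).ne' (Pseq_pos h0 hp M.zero_le).ne']

lemma sum_goodBatches_sq_div_le {C : ℝ} (hMB : M * B = K) (hlam : 0 < lam) (hx : 0 < μ x)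
    (hC : 0 ≤ C) (hp : ∀ t ∈ Icc 1 K, 0 ≤ p t x) (hcov : ∀ t ∈ Icc 1 K, p t x ≤ C * μ x) :
    ∑ m ∈ goodBatches lam μ p B M x, ∑ k ∈ batch B m, p k x ^ 2 / Pseq lam μ p B (m - 1) x ≤
      2 * C * log (1 + C * K / lam) * μ x := by
  set P := fun m => Pseq lam μ p B m x
  subst hMB
  have h0 : 0 < lam * μ x := mul_pos hlam hx
  have hCμ : 0 ≤ C * μ x := mul_nonneg hC hx.le
  have hsq : ∀ k ∈ Icc 1 (M * B), p k x ^ 2 ≤ C * μ x * p k x := fun k hk => by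
    rw [sq]; exact mul_le_mul_of_nonneg_right (hcov k hk) (hp k hk)
  have hratio : P M / P 0 ≤ 1 + C * (M * B : ℕ) / lam := by
    rw [div_le_iff₀ (Pseq_pos h0 hp M.zero_le), Pseq_zero]
    calc P M ≤ lam * μ x + (M * B : ℕ) * (C * μ x) := Pseq_le hcov
      _ = (1 + C * (M * B : ℕ) / lam) * (lam * μ x) := by field_simp
  calc ∑ m ∈ goodBatches lam μ p B M x, ∑ k ∈ batch B m, p k x ^ 2 / P (m - 1)
      ≤ ∑ m ∈ goodBatches lam μ p B M x, C * μ x * ((P m - P (m - 1)) / P (m - 1)) := by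
        refine sum_le_sum fun m hm => ?_
        have hmM := (mem_Icc.1 (mem_goodBatches.1 hm).1).2
        rw [Pseq_sub_Pseq_pred, ← mul_div_assoc, mul_sum, sum_div]
        exact sum_le_sum fun k hk => div_le_div_of_nonneg_right
          (hsq k (batch_subset_Icc hmM hk)) (Pseq_pos h0 hp ((Nat.sub_le m 1).trans hmM)).le
    _ ≤ C * μ x * (2 * log (P M / P 0)) := by
        rw [← mul_sum]
        exact mul_le_mul_of_nonneg_left (sum_goodBatches_div_le_two_mul_log h0 hp) hCμ
    _ ≤ C * μ x * (2 * log (1 + C * (M * B : ℕ) / lam)) := by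
        gcongr
        exact div_pos (Pseq_pos h0 hp le_rfl) (Pseq_pos h0 hp M.zero_le)
    _ = 2 * C * log (1 + C * (M * B : ℕ) / lam) * μ x := by ring

lemma sum_goodBatches_mul_sq_le {g : ℕ → ℝ} (hMB : M * B = K) (h0 : 0 ≤ lam * μ x)
    (hp : ∀ t ∈ Icc 1 K, 0 ≤ p t x) (hg : ∀ k ∈ Icc 1 K, g k ∈ Set.Icc (0 : ℝ) 1) :
    ∑ m ∈ goodBatches lam μ p B M x, ∑ k ∈ batch B m, Pseq lam μ p B (m - 1) x * g k ^ 2 ≤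
      K * lam * μ x + ∑ k ∈ Icc 1 K, ∑ t ∈ Ico 1 (batchStart B k), p t x * g k ^ 2 := by
  set w := fun k => lam * μ x + ∑ t ∈ Ico 1 (batchStart B k), p t x * g k ^ 2
  have hw : ∀ k ∈ Icc 1 K, 0 ≤ w k := fun k hk => add_nonneg h0 <| sum_nonneg fun t ht =>
    mul_nonneg (hp t (Ico_batchStart_subset hk ht)) (sq_nonneg _)
  have hbatch : ∀ m ∈ Icc 1 M, batch B m ⊆ Icc 1 K := fun m hm =>
    hMB ▸ batch_subset_Icc (mem_Icc.1 hm).2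
  calc ∑ m ∈ goodBatches lam μ p B M x, ∑ k ∈ batch B m, Pseq lam μ p B (m - 1) x * g k ^ 2
      ≤ ∑ m ∈ goodBatches lam μ p B M x, ∑ k ∈ batch B m, w k := by
        refine sum_le_sum fun m hm => sum_le_sum fun k hk => ?_
        have hkK := hbatch m (mem_goodBatches.1 hm).1 hk
        obtain ⟨hg0, hg1⟩ := hg k hkK
        have hg2 : g k ^ 2 ≤ 1 := pow_le_one₀ hg0 hg1
        rw [Pseq_pred_eq_of_mem_batch hk, add_mul, sum_mul]
        exact add_le_add_left (mul_le_of_le_one_right h0 hg2) _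
    _ ≤ ∑ m ∈ Icc 1 M, ∑ k ∈ batch B m, w k :=
        sum_le_sum_of_subset_of_nonneg sdiff_subset fun m hm _ =>
          sum_nonneg fun k hk => hw k (hbatch m hm hk)
    _ = K * lam * μ x + ∑ k ∈ Icc 1 K, ∑ t ∈ Ico 1 (batchStart B k), p t x * g k ^ 2 := by
        rw [sum_sum_batch, hMB, sum_add_distrib, sum_const, Nat.card_Icc, nsmul_eq_mul]
        push_cast
        ring

lemma sq_sum_goodBatches_le {C : ℝ} {g : ℕ → ℝ} (hMB : M * B = K) (hlam : 0 < lam)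
    (hx : 0 < μ x) (hC : 0 ≤ C) (hp : ∀ t ∈ Icc 1 K, 0 ≤ p t x)
    (hcov : ∀ t ∈ Icc 1 K, p t x ≤ C * μ x) (hg : ∀ k ∈ Icc 1 K, g k ∈ Set.Icc (0 : ℝ) 1) :
    (∑ m ∈ goodBatches lam μ p B M x, ∑ k ∈ batch B m, p k x * g k) ^ 2 ≤
      (2 * C * log (1 + C * K / lam) * μ x) *
        (K * lam * μ x + ∑ k ∈ Icc 1 K, ∑ t ∈ Ico 1 (batchStart B k), p t x * g k ^ 2) := by
  set P := fun m => Pseq lam μ p B m x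
  set S := (goodBatches lam μ p B M x).sigma (batch B)
  have hP : ∀ i ∈ S, 0 < P (i.1 - 1) := fun i hi => by
    obtain ⟨hm, hk⟩ := mem_sigma.1 hi
    have hmM := (mem_Icc.1 (mem_goodBatches.1 hm).1).2
    exact Pseq_pos (mul_pos hlam hx) (hMB ▸ hp) ((Nat.sub_le _ 1).trans hmM)
  calc (∑ m ∈ goodBatches lam μ p B M x, ∑ k ∈ batch B m, p k x * g k) ^ 2
      = (∑ i ∈ S, p i.2 x * g i.2) ^ 2 := by rw [sum_sigma']
    _ ≤ (∑ i ∈ S, p i.2 x ^ 2 / P (i.1 - 1)) * ∑ i ∈ S, P (i.1 - 1) * g i.2 ^ 2 :=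
        sum_sq_le_sum_mul_sum_of_sq_le_mul S
          (fun i hi => div_nonneg (sq_nonneg _) (hP i hi).le)
          (fun i hi => mul_nonneg (hP i hi).le (sq_nonneg _))
          fun i hi => le_of_eq (by field_simp [(hP i hi).ne'])
    _ ≤ _ := by
        have h1 := sum_goodBatches_sq_div_le hMB hlam hx hC hp hcov
        have h2 := sum_goodBatches_mul_sq_le hMB (mul_pos hlam hx).le hp hg
        rw [sum_sigma'] at h1 h2
        exact mul_le_mul h1 h2 (sum_nonneg fun i hi => mul_nonneg (hP i hi).le (sq_nonneg _))
          ((sum_nonneg fun i hi => div_nonneg (sq_nonneg _) (hP i hi).le).trans h1)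

end PointwiseBound

lemma hasSum_mul_add_sum_sum_mul_sq {X : Type*} {K B : ℕ} {p f : ℕ → X → ℝ} {μ : X → ℝ}
    (c : ℝ) (hp_nonneg : ∀ k ∈ Icc 1 K, ∀ x, 0 ≤ p k x)
    (hp_summable : ∀ k ∈ Icc 1 K, Summable (p k)) (hμ : HasSum μ 1)
    (hf : ∀ k ∈ Icc 1 K, ∀ x, f k x ∈ Set.Icc (0 : ℝ) 1) :
    HasSum (fun x => c * μ x + ∑ k ∈ Icc 1 K, ∑ t ∈ Ico 1 (batchStart B k), p t x * f k x ^ 2)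
      (c + ∑ k ∈ Icc 1 K, ∑ t ∈ Ico 1 (batchStart B k), ∑' x, p t x * f k x ^ 2) := by
  refine (mul_one c ▸ hμ.mul_left c).add
    (hasSum_sum fun k hk => hasSum_sum fun t ht => Summable.hasSum ?_)
  have ht := Ico_batchStart_subset hk ht
  exact (hp_summable t ht).of_nonneg_of_le (fun x => mul_nonneg (hp_nonneg t ht x) (sq_nonneg _))
    fun x => mul_le_of_le_one_right (hp_nonneg t ht x) (pow_le_one₀ (hf k hk x).1 (hf k hk x).2)

theorem good_batch_term_bound_general
    {X : Type*}
    (K B : ℕ) (hBK : B ∣ K)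
    (p : ℕ → X → ℝ) (μ : X → ℝ)
    (hp_nonneg : ∀ k ∈ Finset.Icc 1 K, ∀ x, 0 ≤ p k x)
    (hp_summable : ∀ k ∈ Finset.Icc 1 K, Summable (p k))
    (hμ_nonneg : ∀ x, 0 ≤ μ x)
    (hμ_summable : Summable μ)
    (hμ_sum : ∑' x, μ x = 1)
    (C : ℝ) (hC : 0 < C)
    (hcov : ∀ k ∈ Finset.Icc 1 K, ∀ x, p k x ≤ C * μ x)
    (lam : ℝ) (hlam : 1 ≤ lam)
    (f : ℕ → X → ℝ)
    (hf : ∀ k ∈ Finset.Icc 1 K, ∀ x, f k x ∈ Set.Icc (0 : ℝ) 1) :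
    ∑' x : {x : X // 0 < μ x},
        ∑ m ∈ Finset.Icc 1 (K / B) \ badBatches lam μ p B (K / B) (x : X),
          ∑ k ∈ Finset.Icc ((m - 1) * B + 1) (m * B), p k (x : X) * f k (x : X) ≤
      Real.sqrt (4 * C * Real.log (1 + C * K / lam) *
        (2 * K * lam +
          ∑ k ∈ Finset.Icc 1 K, ∑ t ∈ Finset.Ico 1 (batchStart B k),
            ∑' x, p t x * (f k x) ^ 2)) := by
  have hlam0 : 0 < lam := zero_lt_one.trans_le hlam
  set L := 2 * C * log (1 + C * K / lam) with hL_def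
  set D := ∑ k ∈ Icc 1 K, ∑ t ∈ Ico 1 (batchStart B k), ∑' x, p t x * f k x ^ 2
  set W : X → ℝ := fun x =>
    K * lam * μ x + ∑ k ∈ Icc 1 K, ∑ t ∈ Ico 1 (batchStart B k), p t x * f k x ^ 2
  have hL : 0 ≤ L :=
    mul_nonneg (by positivity) (log_nonneg (le_add_of_nonneg_right (by positivity)))
  have hW : HasSum W (K * lam + D) := hasSum_mul_add_sum_sum_mul_sq _ hp_nonneg hp_summable
    (hμ_sum ▸ hμ_summable.hasSum) hf
  have hWnn : ∀ x, 0 ≤ W x := fun x => add_nonneg (mul_nonneg (by positivity) (hμ_nonneg x))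
    (sum_nonneg fun k hk => sum_nonneg fun t ht =>
      mul_nonneg (hp_nonneg t (Ico_batchStart_subset hk ht) x) (sq_nonneg _))
  calc _ ≤ √((∑' x : {x // 0 < μ x}, L * μ x) * ∑' x : {x // 0 < μ x}, W x) :=
        tsum_le_sqrt_mul_of_sq_le_mul (fun x => mul_nonneg hL (hμ_nonneg x)) (fun x => hWnn x)
          ((hμ_summable.mul_left L).subtype _) (hW.summable.subtype _) fun x =>
            sq_sum_goodBatches_le (Nat.div_mul_cancel hBK) hlam0 x.2 hC.le
              (fun t ht => hp_nonneg t ht x) (fun t ht => hcov t ht x) fun k hk => hf k hk x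
    _ ≤ √(L * (K * lam + D)) := by
        refine sqrt_le_sqrt (mul_le_mul ?_ ?_ (tsum_nonneg fun x => hWnn x) hL)
        · exact ((hμ_summable.mul_left L).tsum_subtype_le _ _ fun x =>
            mul_nonneg hL (hμ_nonneg x)).trans_eq (by rw [tsum_mul_left, hμ_sum, mul_one])
        · exact (hW.summable.tsum_subtype_le W _ hWnn).trans_eq hW.tsum_eq
    _ ≤ √(2 * L * (2 * K * lam + D)) := by
        have hKlam : 0 ≤ L * (K * lam) := mul_nonneg hL (by positivity)
        have hKlamD : 0 ≤ L * (K * lam + D) := mul_nonneg hL (hW.nonneg hWnn)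
        exact sqrt_le_sqrt (by linarith)
    _ = _ := by rw [hL_def]; ring_nf

/-- Bound on the good-batch term `T_good` in the proof of Lemma C.1 of the
paper.  The `m`-th batch consists of episodes `(m-1)·B + 1, …, m·B`. -/
theorem good_batch_term_bound
    {X : Type*} [Countable X]
    (K B : ℕ) (hK : 0 < K) (hB : 0 < B) (hBK : B ∣ K)
    (p : ℕ → X → ℝ) (μ : X → ℝ)
    (hp_nonneg : ∀ k ∈ Finset.Icc 1 K, ∀ x, 0 ≤ p k x)
    (hp_summable : ∀ k ∈ Finset.Icc 1 K, Summable (p k))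
    (hp_sum : ∀ k ∈ Finset.Icc 1 K, ∑' x, p k x = 1)
    (hμ_nonneg : ∀ x, 0 ≤ μ x)
    (hμ_summable : Summable μ)
    (hμ_sum : ∑' x, μ x = 1)
    (C : ℝ) (hC : 0 < C)
    (hcov : ∀ k ∈ Finset.Icc 1 K, ∀ x, p k x ≤ C * μ x)
    (lam : ℝ) (hlam : 1 ≤ lam)
    (f : ℕ → X → ℝ)
    (hf : ∀ k ∈ Finset.Icc 1 K, ∀ x, f k x ∈ Set.Icc (0 : ℝ) 1) :
    ∑' x : {x : X // 0 < μ x},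
        ∑ m ∈ Finset.Icc 1 (K / B) \ badBatches lam μ p B (K / B) (x : X),
          ∑ k ∈ Finset.Icc ((m - 1) * B + 1) (m * B), p k (x : X) * f k (x : X) ≤
      Real.sqrt (4 * C * Real.log (1 + C * K / lam) *
        (2 * K * lam +
          ∑ k ∈ Finset.Icc 1 K, ∑ t ∈ Finset.Ico 1 (batchStart B k),
            ∑' x, p t x * (f k x) ^ 2)) :=
  good_batch_term_bound_general K B hBK p μ hp_nonneg hp_summable hμ_nonneg hμ_summable hμ_sum C hC
    hcov lam hlam f hf
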